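/- Let F : Set → Set be a finitary functor and let F̄ be its canonical Perm(𝕍)-set lifting (induced by the strength s_{Perm(𝕍),X} : Perm(𝕍) × FX → F(Perm(𝕍) × X)). Then for every nominal set X, every element of F̄X has finite support; hence F̄ restricts to an endofunctor on nominal sets. -/

import Mathlib

/-!
An element `t` of `F X` comes from `F S` for a finite `S ⊆ X`. A permutation fixing the (finite)
union of the supports of the elements of `S` fixes `S` pointwise, so it acts on `t` through a map
that agrees with the identity on `S`, and functoriality makes it fix `t`.
-/

/-- The subgroup of finite (finitary) permutations of the set `𝕍` of atoms. -/
def FinPerm (𝕍 : Type*) : Subgroup (Equiv.Perm 𝕍) where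
  carrier := {π | {a | π a ≠ a}.Finite}
  one_mem' := by simp
  mul_mem' := by
    intro π σ hπ hσ
    apply Set.Finite.subset (hσ.union (hπ.preimage σ.injective.injOn))
    intro a ha
    by_cases h : σ a = a
    · right
      simp only [Set.mem_preimage, Set.mem_setOf_eq]
      simpa [Equiv.Perm.mul_apply, h] using ha
    · exact Or.inl h
  inv_mem' := by
    intro π hπ
    have : {a | π⁻¹ a ≠ a} = {a | π a ≠ a} := by
      ext a
      simp only [Set.mem_setOf_eq, not_iff_not]
      rw [Equiv.Perm.inv_eq_iff_eq, eq_comm]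
    change {a | π⁻¹ a ≠ a}.Finite
    rw [this]
    exact hπ

open CategoryTheory

theorem MulAction.exists_finset_supports_of_forall_mem {G α β : Type*} [SMul G α] [SMul G β]
    (T : Finset β) (h : ∀ b ∈ T, ∃ s : Finset α, Supports G (s : Set α) b) :
    ∃ s : Finset α, ∀ b ∈ T, Supports G (s : Set α) b := by
  classical
  choose s hs using h
  refine ⟨T.attach.biUnion fun b => s b.1 b.2, fun b hb => (hs b hb).mono ?_⟩
  intro a ha
  simpa only [Finset.coe_biUnion, Set.mem_iUnion] using ⟨⟨b, hb⟩, T.mem_attach _, ha⟩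

theorem CategoryTheory.FunctorToTypes.map_map_subtypeVal_congr.{u, v} {X Y : Type u} (F : Type u ⥤ Type v)
    {p : X → Prop} {f g : X → Y} (h : ∀ x, p x → f x = g x) (t : F.obj {x // p x}) :
    F.map (TypeCat.ofHom f) (F.map (TypeCat.ofHom Subtype.val) t) =
      F.map (TypeCat.ofHom g) (F.map (TypeCat.ofHom Subtype.val) t) := by
  have hcomp : TypeCat.ofHom (Subtype.val : {x // p x} → X) ≫ TypeCat.ofHom f =
      TypeCat.ofHom Subtype.val ≫ TypeCat.ofHom g := by
    ext x
    exact h x.1 x.2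
  rw [← F.map_comp_apply, ← F.map_comp_apply, hcomp]

/-- The lifted action `π • t = F.map (π • ·) t` is `F α ∘ s_{Perm(𝕍),X}` for the canonical
strength `s`. -/
theorem stmt9_general {𝕍 : Type} (F : Type ⥤ Type)
    (hfin : ∀ (X : Type) (t : F.obj X), ∃ S : Finset X,
      ∃ t' : F.obj {x : X // x ∈ S}, F.map (TypeCat.ofHom Subtype.val) t' = t)
    (X : Type) [MulAction (FinPerm 𝕍) X]
    (hX : ∀ x : X, ∃ S : Finset 𝕍, ∀ π : FinPerm 𝕍, (∀ a ∈ S, π • a = a) → π • x = x)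
    (t : F.obj X) :
    ∃ S : Finset 𝕍, ∀ π : FinPerm 𝕍, (∀ a ∈ S, π • a = a) →
      F.map (TypeCat.ofHom fun x : X => π • x) t = t := by
  obtain ⟨T, t', rfl⟩ := hfin X t
  obtain ⟨S, hS⟩ := MulAction.exists_finset_supports_of_forall_mem (G := FinPerm 𝕍) T
    fun x _ => (hX x).imp fun _ hx π hπ => hx π fun a ha => hπ ha
  refine ⟨S, fun π hπ => ?_⟩
  calc F.map (TypeCat.ofHom (π • ·)) (F.map (TypeCat.ofHom Subtype.val) t')
      = F.map (TypeCat.ofHom id) (F.map (TypeCat.ofHom Subtype.val) t') :=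
        FunctorToTypes.map_map_subtypeVal_congr F (fun x hx => hS x hx π fun a ha => hπ a ha) t'
    _ = F.map (TypeCat.ofHom Subtype.val) t' := F.map_id_apply X _

/-- For a finitary `Set`-functor `F` and a nominal set `X`, every element of `F X` is
finitely supported with respect to the canonical lifting action
`π • t = F.map (π • ·) t` (which is `F α ∘ s_{Perm(𝕍),X}` for the canonical strength). -/
theorem stmt9 {𝕍 : Type} [Infinite 𝕍] (F : Type ⥤ Type)
    (hfin : ∀ (X : Type) (t : F.obj X), ∃ S : Finset X,
      ∃ t' : F.obj {x : X // x ∈ S}, F.map (TypeCat.ofHom Subtype.val) t' = t)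
    (X : Type) [MulAction (FinPerm 𝕍) X]
    (hX : ∀ x : X, ∃ S : Finset 𝕍, ∀ π : FinPerm 𝕍, (∀ a ∈ S, π • a = a) → π • x = x)
    (t : F.obj X) :
    ∃ S : Finset 𝕍, ∀ π : FinPerm 𝕍, (∀ a ∈ S, π • a = a) →
      F.map (TypeCat.ofHom fun x : X => π • x) t = t :=
  stmt9_general F hfin X hX t
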